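/- arXiv:1504.05932 — 3 statements merged into one kernel-verified Lean document; each statement's English description precedes it below -/
import Mathlib

section
/- Let f be a strategy-proof and non-bossy allocation mechanism over a basic categorized domain. For any pair of profiles P and P' such that for all agents j, the set of bundles ranked strictly above f^j(P) in R_j' is a subset of the set of bundles ranked strictly above f^j(P) in R_j, we have f(P') = f(P). -/
/-- A bundle in a basic categorized domain: one item (from `Fin n`) per category (`Fin p`). -/
abbrev Bundle (n p : ℕ) := Fin p → Fin n

/-- A preference: a binary relation on bundles (`R a b` means `a` is strictly preferred to `b`). -/
abbrev Pref (n p : ℕ) := Bundle n p → Bundle n p → Prop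

/-- A profile assigns a preference to each of the `n` agents. -/
abbrev Profile (n p : ℕ) := Fin n → Pref n p

/-- An allocation mechanism: maps a profile to the bundle of each agent. -/
abbrev Mechanism (n p : ℕ) := Profile n p → Fin n → Bundle n p

/-- All preferences in the profile are strict linear orders. -/
def ValidProfile {n p : ℕ} (P : Profile n p) : Prop :=
  ∀ j, IsStrictTotalOrder (Bundle n p) (P j)

/-- A valid allocation: in every category, no item is given to two agents. -/
def ValidAlloc {n p : ℕ} (A : Fin n → Bundle n p) : Prop :=
  ∀ i : Fin p, Function.Injective fun j => A j i

/-- Strategy-proofness: no agent can get a strictly better bundle by misreporting. -/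
def StrategyProof {n p : ℕ} (f : Mechanism n p) : Prop :=
  ∀ P : Profile n p, ValidProfile P → ∀ j : Fin n, ∀ R' : Pref n p,
    IsStrictTotalOrder (Bundle n p) R' →
    f P j = f (Function.update P j R') j ∨ P j (f P j) (f (Function.update P j R') j)

/-- Non-bossiness: an agent cannot change others' bundles without changing her own. -/
def NonBossy {n p : ℕ} (f : Mechanism n p) : Prop :=
  ∀ P : Profile n p, ValidProfile P → ∀ j : Fin n, ∀ R' : Pref n p,
    IsStrictTotalOrder (Bundle n p) R' →
    f P j = f (Function.update P j R') j → f P = f (Function.update P j R')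

/-- Relabel a bundle by permuting the items of category `i` by `M`. -/
def relabel {n p : ℕ} (i : Fin p) (M : Fin n ≃ Fin n) (d : Bundle n p) : Bundle n p :=
  Function.update d i (M (d i))

/-- The preference induced on relabeled bundles. -/
def permPref {n p : ℕ} (i : Fin p) (M : Fin n ≃ Fin n) (R : Pref n p) : Pref n p :=
  fun a b => R (relabel i M.symm a) (relabel i M.symm b)

/-- Category-wise neutrality: permuting the items of one category permutes the allocation. -/
def CatNeutral {n p : ℕ} (f : Mechanism n p) : Prop :=
  ∀ P : Profile n p, ValidProfile P → ∀ (i : Fin p) (M : Fin n ≃ Fin n) (j : Fin n),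
    f (fun j' => permPref i M (P j')) j = relabel i M (f P j)

/-- Pareto optimality of a mechanism. -/
def ParetoOptimal {n p : ℕ} (f : Mechanism n p) : Prop :=
  ∀ P : Profile n p, ValidProfile P →
    ¬ ∃ A : Fin n → Bundle n p, ValidAlloc A ∧
      (∀ j, A j = f P j ∨ P j (A j) (f P j)) ∧ (∃ j, P j (A j) (f P j))

/-- `R'` is a pushup of `d` from `R`: relative order of other bundles unchanged,
and the set of bundles above `d` only shrinks. -/
def Pushup {n p : ℕ} (d : Bundle n p) (R R' : Pref n p) : Prop :=
  (∀ a b, a ≠ d → b ≠ d → (R' a b ↔ R a b)) ∧ (∀ a, R' a d → R a d)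

/-- `A` is the serial-dictatorship allocation for profile `P` and agent order `K`
(`K t` is the agent acting at step `t`): each dictator's bundle avoids earlier dictators'
items and is preferred to every other bundle avoiding earlier dictators' items. -/
def IsSDAlloc {n p : ℕ} (P : Profile n p) (K : Fin n ≃ Fin n) (A : Fin n → Bundle n p) : Prop :=
  ∀ t : Fin n,
    (∀ s : Fin n, s < t → ∀ i, A (K s) i ≠ A (K t) i) ∧
    (∀ b : Bundle n p, (∀ s : Fin n, s < t → ∀ i, A (K s) i ≠ b i) →
      b ≠ A (K t) → P (K t) (A (K t)) b)

/-- `f` is a serial dictatorship. -/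
def SerialDict {n p : ℕ} (f : Mechanism n p) : Prop :=
  ∃ K : Fin n ≃ Fin n, ∀ P : Profile n p, ValidProfile P → IsSDAlloc P K (f P)

/-!
If agent `j`'s new report `R'` ranks no bundle above her bundle `b` that `R` did not, she keeps
`b`: an outcome `b' ≠ b` would be `R`-better than `b` by strategy-proofness at the old profile,
and `R'`-worse, hence `R`-worse, by strategy-proofness at the new one. Non-bossiness then freezes
the whole allocation, so switching the agents from `P` to `P'` one at a time never changes `f`.
-/

open Function

section

variable {n p : ℕ}

lemma ValidProfile.update {P : Profile n p} (hP : ValidProfile P) (j : Fin n) {R : Pref n p}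
    (hR : IsStrictTotalOrder (Bundle n p) R) : ValidProfile (update P j R) := by
  intro k
  rcases eq_or_ne k j with rfl | hkj
  · simpa only [update_self] using hR
  · simpa only [update_of_ne hkj] using hP k

lemma ValidProfile.piecewise {P P' : Profile n p} (hP : ValidProfile P)
    (hP' : ValidProfile P') (S : Finset (Fin n)) : ValidProfile (S.piecewise P' P) := by
  intro k
  by_cases hk : k ∈ S
  · simpa only [Finset.piecewise_eq_of_mem _ _ _ hk] using hP' k
  · simpa only [Finset.piecewise_eq_of_notMem _ _ _ hk] using hP k

lemma StrategyProof.apply_update_self_of_upper_subset {f : Mechanism n p} (hSP : StrategyProof f)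
    {P : Profile n p} (hP : ValidProfile P) (j : Fin n) {R : Pref n p}
    (hR : IsStrictTotalOrder (Bundle n p) R) (hup : ∀ c, R c (f P j) → P j c (f P j)) :
    f (update P j R) j = f P j := by
  have hback : update (update P j R) j (P j) = P := by rw [update_idem, update_eq_self]
  by_contra hne
  obtain hsame | hbetter := hSP P hP j R hR
  · exact hne hsame.symm
  obtain hsame' | hworse := hSP _ (hP.update j hR) j (P j) (hP j)
  · rw [hback] at hsame'
    exact hne hsame'
  rw [hback, update_self] at hworse
  have := hP j
  exact irrefl _ (_root_.trans hbetter (hup _ hworse))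

lemma apply_update_eq_of_upper_subset {f : Mechanism n p} (hSP : StrategyProof f)
    (hNB : NonBossy f) {P : Profile n p} (hP : ValidProfile P) (j : Fin n) {R : Pref n p}
    (hR : IsStrictTotalOrder (Bundle n p) R) (hup : ∀ c, R c (f P j) → P j c (f P j)) :
    f (update P j R) = f P :=
  (hNB P hP j R hR (hSP.apply_update_self_of_upper_subset hP j hR hup).symm).symm

end

theorem statement1 (n p : ℕ) (f : Mechanism n p)
    (hSP : StrategyProof f) (hNB : NonBossy f)
    (P P' : Profile n p) (hP : ValidProfile P) (hP' : ValidProfile P')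
    (h : ∀ j : Fin n, ∀ c : Bundle n p, P' j c (f P j) → P j c (f P j)) :
    f P' = f P := by
  have hswitched : ∀ S : Finset (Fin n), f (S.piecewise P' P) = f P := by
    intro S
    induction S using Finset.induction_on with
    | empty => rw [Finset.piecewise_empty]
    | insert j S hj ih =>
      have hup : ∀ c, P' j c (f (S.piecewise P' P) j) → S.piecewise P' P j c
          (f (S.piecewise P' P) j) := by
        rw [ih, Finset.piecewise_eq_of_notMem _ _ _ hj]
        exact h j
      rw [Finset.piecewise_insert,
        apply_update_eq_of_upper_subset hSP hNB (hP.piecewise hP' S) j (hP' j) hup, ih]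
  simpa only [Finset.piecewise_univ] using hswitched Finset.univ
end

section
/- In a categorial sequential allocation mechanism (CSAM) defined by an order O over agent–category pairs, if agent j is optimistic then for every profile the rank (in her own preference order, with rank 1 best and rank n^p worst) of the bundle she receives is at most n^p + 1 − ∏_{l=K_j}^{p} k_{j, O_j(l)}. -/
open scoped Classical

/-- A categorial sequential allocation mechanism: a linear order over agent–category
pairs, i.e. a bijection from rounds `Fin (n*p)` to pairs. -/
abbrev Csam (n p : ℕ) := Fin (n * p) ≃ Fin n × Fin p

/-- The rank of bundle `b` in preference `R` (1 = best, `n^p` = worst). -/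
noncomputable def rank {n p : ℕ} (R : Pref n p) (b : Bundle n p) : ℕ :=
  1 + (Finset.univ.filter fun c => R c b).card

/-- `kval O j i`: the number of category-`i` items still available when agent `j`
picks from category `i` (depends only on `O`). -/
def kval {n p : ℕ} (O : Csam n p) (j : Fin n) (i : Fin p) : ℕ :=
  1 + (Finset.univ.filter fun j' : Fin n => O.symm (j, i) < O.symm (j', i)).card

/-- `Oj O j l`: the `l`-th category (0-based) that agent `j` visits in `O`. -/
noncomputable def Oj {n p : ℕ} (O : Csam n p) (j : Fin n) (l : Fin p) : Fin p :=
  (O ((Finset.univ.image fun i : Fin p => O.symm (j, i)).orderIsoOfFin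
      (by
        rw [Finset.card_image_of_injective _
          (fun a b h => congrArg Prod.snd (O.symm.injective h))]
        simp) l).1).2

/-- `NoInterruptF O j K`: for every later position `l > K` of agent `j`, no other agent
picks from category `Oj O j l` between agent `j`'s pick in category `Oj O j K`
and her pick in category `Oj O j l`. -/
def NoInterruptF {n p : ℕ} (O : Csam n p) (j : Fin n) (K : ℕ) : Prop :=
  ∀ lK : Fin p, (lK : ℕ) = K → ∀ l : Fin p, lK < l → ∀ j' : Fin n, j' ≠ j →
    ¬ (O.symm (j, Oj O j lK) < O.symm (j', Oj O j l) ∧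
       O.symm (j', Oj O j l) < O.symm (j, Oj O j l))

/-- `Kval O j`: the smallest (0-based) index `K` such that agent `j` is not interrupted
from position `K` onwards. -/
noncomputable def Kval {n p : ℕ} (O : Csam n p) (j : Fin n) : ℕ :=
  sInf {K : ℕ | K < p ∧ NoInterruptF O j K}

/-- Item `d` of category `i` is still available at round `t` under final allocation `A`. -/
def availAt {n p : ℕ} (O : Csam n p) (A : Fin n → Bundle n p) (t : Fin (n * p))
    (i : Fin p) (d : Fin n) : Prop :=
  ∀ j' : Fin n, O.symm (j', i) < t → A j' i ≠ d

/-- Bundle `b` is still achievable by agent `j` at round `t`: it agrees with her previous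
choices and all remaining components are still available. -/
def achievable {n p : ℕ} (O : Csam n p) (A : Fin n → Bundle n p) (j : Fin n)
    (t : Fin (n * p)) (b : Bundle n p) : Prop :=
  (∀ c : Fin p, O.symm (j, c) < t → b c = A j c) ∧
  (∀ c : Fin p, ¬ O.symm (j, c) < t → availAt O A t c (b c))

/-- Agent `j` plays optimistically in the run producing allocation `A`: at each of her
rounds she picks the item of her top-ranked still-achievable bundle. -/
def OptPlays {n p : ℕ} (O : Csam n p) (P : Profile n p) (A : Fin n → Bundle n p)
    (j : Fin n) : Prop :=
  ∀ i : Fin p, ∃ b : Bundle n p, achievable O A j (O.symm (j, i)) b ∧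
    (∀ b' : Bundle n p, achievable O A j (O.symm (j, i)) b' → b' ≠ b → P j b b') ∧
    A j i = b i

/-- Agent `j` plays pessimistically in the run producing `A`: at each of her rounds, for
every available alternative item `d'`, some achievable bundle with component `d'` is worse
than every achievable bundle with the component she actually chose. -/
def PesPlays {n p : ℕ} (O : Csam n p) (P : Profile n p) (A : Fin n → Bundle n p)
    (j : Fin n) : Prop :=
  ∀ i : Fin p, ∀ d' : Fin n, availAt O A (O.symm (j, i)) i d' → d' ≠ A j i →
    ∃ w' : Bundle n p, achievable O A j (O.symm (j, i)) w' ∧ w' i = d' ∧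
      ∀ w : Bundle n p, achievable O A j (O.symm (j, i)) w → w i = A j i → P j w w'

/-- `∏_{l = K_j}^{p} k_{j, O_j(l)}`. -/
noncomputable def optProd {n p : ℕ} (O : Csam n p) (j : Fin n) : ℕ :=
  ∏ l ∈ Finset.univ.filter (fun l : Fin p => Kval O j ≤ (l : ℕ)), kval O j (Oj O j l)

/-- `∑_{l = 1}^{p} (k_{j, O_j(l)} - 1)`. -/
noncomputable def pesSum {n p : ℕ} (O : Csam n p) (j : Fin n) : ℕ :=
  ∑ l : Fin p, (kval O j (Oj O j l) - 1)

/-!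
Let `b` be the optimistic agent's top achievable bundle when she picks from category
`O_j(K_j)`. By the choice of `K_j`, from that round on no other agent takes an item from a
category before `j` has made her own pick there, so `b` stays achievable at each of her later
turns. Her top achievable bundle at such a turn was also achievable at the earlier round, so it
cannot beat `b` and must be `b` itself. So `j` ends up with `b`, and every bundle achievable
at that round (there are at least `∏_{l ≥ K_j} k_{j, O_j(l)}` of them, as category `c` still
offers at least `k_{j,c}` items) is no better than `b`.
-/

open Finset

theorem symm_Oj_strictMono {n p : ℕ} (O : Csam n p) (j : Fin n) :
    StrictMono fun l => O.symm (j, Oj O j l) := by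
  set s := univ.image fun i : Fin p => O.symm (j, i)
  have hs : s.card = p := by
    rw [card_image_of_injective _
      (fun a b h => congrArg Prod.snd (O.symm.injective h))]
    simp
  have hval : ∀ l, O.symm (j, Oj O j l) = s.orderIsoOfFin hs l := by
    intro l
    obtain ⟨i, -, hi⟩ := mem_image.mp (s.orderIsoOfFin hs l).2
    change O.symm (j, (O (s.orderIsoOfFin hs l)).2) = _
    rw [← hi, Equiv.apply_symm_apply]
  intro a b hab
  simpa only [hval] using Subtype.coe_lt_coe.mpr ((s.orderIsoOfFin hs).strictMono hab)

theorem Oj_bijective {n p : ℕ} (O : Csam n p) (j : Fin n) : Function.Bijective (Oj O j) := by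
  refine Finite.injective_iff_bijective.mp fun a b h => (symm_Oj_strictMono O j).injective ?_
  simp only [h]

theorem Kval_lt_and_noInterruptF {n p : ℕ} (O : Csam n p) (j : Fin n) (hp : 0 < p) :
    Kval O j < p ∧ NoInterruptF O j (Kval O j) :=
  Nat.sInf_mem (s := {K | K < p ∧ NoInterruptF O j K})
    ⟨p - 1, by omega, fun lK hlK l hl _ _ _ => by
      have : (lK : ℕ) < l := hl
      omega⟩

noncomputable def startRound {n p : ℕ} (O : Csam n p) (j : Fin n) (hp : 0 < p) : Fin (n * p) :=
  O.symm (j, Oj O j ⟨Kval O j, (Kval_lt_and_noInterruptF O j hp).1⟩)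

def UninterruptedFrom {n p : ℕ} (O : Csam n p) (j : Fin n) (t₀ : Fin (n * p)) : Prop :=
  ∀ c j', j' ≠ j → ¬ (t₀ < O.symm (j', c) ∧ O.symm (j', c) < O.symm (j, c))

theorem uninterruptedFrom_startRound {n p : ℕ} (O : Csam n p) (j : Fin n) (hp : 0 < p) :
    UninterruptedFrom O j (startRound O j hp) := by
  rintro c j' hj' ⟨hstart, hbefore⟩
  obtain ⟨l, rfl⟩ := (Oj_bijective O j).surjective c
  have hK : (⟨Kval O j, (Kval_lt_and_noInterruptF O j hp).1⟩ : Fin p) < l :=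
    (symm_Oj_strictMono O j).lt_iff_lt.mp (hstart.trans hbefore)
  exact (Kval_lt_and_noInterruptF O j hp).2 _ rfl l hK j' hj' ⟨hstart, hbefore⟩

theorem optProd_eq_prod_kval {n p : ℕ} (O : Csam n p) (j : Fin n) (hp : 0 < p) :
    optProd O j = ∏ c : Fin p with startRound O j hp ≤ O.symm (j, c), kval O j c := by
  refine prod_bijective (Oj O j) (Oj_bijective O j) (fun l => ?_) (fun _ _ => rfl)
  simp only [mem_filter, mem_univ, true_and]
  exact ((symm_Oj_strictMono O j).le_iff_le (a := ⟨Kval O j, _⟩)).symm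

theorem kval_eq_card {n p : ℕ} (O : Csam n p) (j : Fin n) (c : Fin p) :
    kval O j c = #{j' | O.symm (j, c) ≤ O.symm (j', c)} := by
  have hinsert : filter (fun j' => O.symm (j, c) ≤ O.symm (j', c)) univ
      = insert j (filter (fun j' => O.symm (j, c) < O.symm (j', c)) univ) := by
    ext j'
    simp only [mem_filter, mem_univ, true_and, mem_insert, le_iff_lt_or_eq,
      O.symm.injective.eq_iff, Prod.mk.injEq, and_true, eq_comm (a := j)]
    tauto
  rw [hinsert, card_insert_of_notMem (by simp), add_comm]
  rfl

theorem rank_le_of_forall_not {n p : ℕ} {R : Pref n p} {b : Bundle n p} {s : Finset (Bundle n p)}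
    (hs : ∀ x ∈ s, ¬ R x b) : rank R b ≤ n ^ p + 1 - #s := by
  have hsplit := card_filter_add_card_filter_not (s := univ) (R · b)
  have hs' : #s ≤ #{x | ¬ R x b} := card_le_card fun x hx => by simpa using hs x hx
  simp only [card_univ, Fintype.card_fun, Fintype.card_fin] at hsplit
  unfold rank
  omega

theorem kval_le_card_availAt {n p : ℕ} (O : Csam n p) (A : Fin n → Bundle n p) (j : Fin n)
    {t : Fin (n * p)} {c : Fin p} (hc : t ≤ O.symm (j, c)) :
    kval O j c ≤ #{d | availAt O A t c d} := by
  set earlier : Finset (Fin n) := {j' | O.symm (j', c) < t}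
  have hsplit : #earlier + #{j' | ¬ O.symm (j', c) < t} = n := by
    simpa using card_filter_add_card_filter_not (s := univ) fun j' => O.symm (j', c) < t
  have hlater : kval O j c ≤ #{j' | ¬ O.symm (j', c) < t} := by
    rw [kval_eq_card]
    exact card_le_card fun j' => by simpa using hc.trans
  have htaken : n ≤ #{d | availAt O A t c d} + #earlier := calc
    n = #(univ : Finset (Fin n)) := (card_fin n).symm
    _ ≤ #(univ.filter (availAt O A t c) ∪ earlier.image (A · c)) :=
      card_le_card fun d _ => by
        by_cases hd : availAt O A t c d
        · simp [hd]
        · simp only [availAt, not_forall, not_not] at hd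
          obtain ⟨j', hj', rfl⟩ := hd
          exact mem_union_right _ (mem_image_of_mem _ (by simpa [earlier] using hj'))
    _ ≤ #{d | availAt O A t c d} + #earlier := (card_union_le _ _).trans (by grw [card_image_le])
  omega

theorem prod_kval_le_card_achievable {n p : ℕ} (O : Csam n p) (A : Fin n → Bundle n p) (j : Fin n)
    (t : Fin (n * p)) :
    ∏ c : Fin p with t ≤ O.symm (j, c), kval O j c ≤ #{b | achievable O A j t b} := by
  let choices : Fin p → Finset (Fin n) := fun c =>
    if O.symm (j, c) < t then {A j c} else univ.filter (availAt O A t c)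
  calc ∏ c : Fin p with t ≤ O.symm (j, c), kval O j c
      = ∏ c, if t ≤ O.symm (j, c) then kval O j c else 1 := prod_filter _ _
    _ ≤ ∏ c, #(choices c) := by
      refine prod_le_prod' fun c _ => ?_
      by_cases hc : O.symm (j, c) < t
      · simp [choices, hc, not_le.mpr hc]
      · simpa [choices, hc, not_lt.mp hc] using kval_le_card_availAt O A j (not_lt.mp hc)
    _ = #(Fintype.piFinset choices) := (Fintype.card_piFinset choices).symm
    _ ≤ #{b | achievable O A j t b} := card_le_card fun b hb => by
      rw [Fintype.mem_piFinset] at hb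
      refine mem_filter.mpr ⟨mem_univ b, fun c hc => ?_, fun c hc => ?_⟩
      · simpa [choices, hc] using hb c
      · simpa [choices, hc] using hb c

section Allocation

variable {n p : ℕ} {O : Csam n p} {A : Fin n → Bundle n p} {j : Fin n}

theorem achievable.anti (hA : ValidAlloc A) {t t' : Fin (n * p)} (htt' : t ≤ t')
    {b : Bundle n p} (hb : achievable O A j t' b) : achievable O A j t b := by
  refine ⟨fun c hc => hb.1 c (hc.trans_le htt'), fun c hc => ?_⟩
  by_cases hc' : O.symm (j, c) < t'
  · rw [hb.1 c hc']
    intro j' hj' hj'j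
    obtain rfl : j' = j := hA c hj'j
    exact hc hj'
  · exact fun j' hj' => hb.2 c hc' j' (hj'.trans_le htt')

theorem achievable_of_uninterruptedFrom {c₀ : Fin p} {b : Bundle n p}
    (hb : achievable O A j (O.symm (j, c₀)) b)
    (hNI : UninterruptedFrom O j (O.symm (j, c₀)))
    {t : Fin (n * p)} (ht : O.symm (j, c₀) ≤ t) (hfollow : ∀ c, O.symm (j, c) < t → b c = A j c) :
    achievable O A j t b := by
  refine ⟨hfollow, fun c hc j' hj' => ?_⟩
  rcases lt_or_ge (O.symm (j', c)) (O.symm (j, c₀)) with hbefore | hafter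
  · exact hb.2 c (fun h => hc (h.trans_le ht)) j' hbefore
  · have hj'j : j' ≠ j := by
      rintro rfl
      exact hc hj'
    have hne : O.symm (j', c) ≠ O.symm (j, c₀) := fun h =>
      hj'j (congrArg Prod.fst (O.symm.injective h))
    exact absurd ⟨lt_of_le_of_ne hafter hne.symm, hj'.trans_le (not_lt.mp hc)⟩ (hNI c j' hj'j)

variable {P : Profile n p} [Std.Asymm (P j)]

theorem OptPlays.apply_eq_of_achievable (hopt : OptPlays O P A j) (hA : ValidAlloc A)
    {t : Fin (n * p)} {b : Bundle n p}
    (hbtop : ∀ b', achievable O A j t b' → b' ≠ b → P j b b')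
    {c : Fin p} (ht : t ≤ O.symm (j, c)) (hb : achievable O A j (O.symm (j, c)) b) :
    A j c = b c := by
  obtain ⟨b', hb', hb'top, hAb'⟩ := hopt c
  rw [hAb']
  by_contra hne
  have hbb' : b' ≠ b := fun h => hne (h ▸ rfl)
  exact asymm (hbtop b' (hb'.anti hA ht) hbb') (hb'top b hb hbb'.symm)

theorem OptPlays.eq_of_uninterruptedFrom (hopt : OptPlays O P A j) (hA : ValidAlloc A)
    {c₀ : Fin p} {b : Bundle n p} (hb : achievable O A j (O.symm (j, c₀)) b)
    (hbtop : ∀ b', achievable O A j (O.symm (j, c₀)) b' → b' ≠ b → P j b b')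
    (hNI : UninterruptedFrom O j (O.symm (j, c₀))) :
    A j = b := by
  funext c
  induction c using (InvImage.wf (fun c => O.symm (j, c)) wellFounded_lt).induction with
  | _ c ih =>
    rcases lt_or_ge (O.symm (j, c)) (O.symm (j, c₀)) with hbefore | hafter
    · exact (hb.1 c hbefore).symm
    · exact hopt.apply_eq_of_achievable hA hbtop hafter
        (achievable_of_uninterruptedFrom hb hNI hafter fun c' hc' => (ih c' hc').symm)

theorem OptPlays.not_pref_of_achievable (hopt : OptPlays O P A j) (hA : ValidAlloc A)
    {c₀ : Fin p}
    (hNI : UninterruptedFrom O j (O.symm (j, c₀)))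
    {b : Bundle n p} (hb : achievable O A j (O.symm (j, c₀)) b) : ¬ P j b (A j) := by
  obtain ⟨top, htop, htop_max, -⟩ := hopt c₀
  obtain rfl : A j = top := hopt.eq_of_uninterruptedFrom hA htop htop_max hNI
  by_cases hb_top : b = A j
  · exact hb_top ▸ irrefl _
  · exact asymm (htop_max b hb hb_top)

end Allocation

theorem statement7_general (n p : ℕ) (hp : 0 < p) (O : Csam n p)
    (P : Profile n p) (hP : ValidProfile P)
    (A : Fin n → Bundle n p) (hA : ValidAlloc A)
    (isOpt : Fin n → Bool)
    (hplay : ∀ j : Fin n, (isOpt j = true → OptPlays O P A j) ∧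
      (isOpt j = false → PesPlays O P A j))
    (j : Fin n) (hj : isOpt j = true) :
    rank (P j) (A j) ≤ n ^ p + 1 - optProd O j := by
  have := hP j
  have hworse : ∀ b ∈ ({b | achievable O A j (startRound O j hp) b} : Finset (Bundle n p)),
      ¬ P j b (A j) := fun b hb =>
    ((hplay j).1 hj).not_pref_of_achievable hA (uninterruptedFrom_startRound O j hp)
      (mem_filter.mp hb).2
  calc rank (P j) (A j) ≤ n ^ p + 1 - #{b | achievable O A j (startRound O j hp) b} :=
        rank_le_of_forall_not hworse
    _ ≤ n ^ p + 1 - optProd O j := by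
      rw [optProd_eq_prod_kval O j hp]
      exact Nat.sub_le_sub_left (prod_kval_le_card_achievable O A j _) _

theorem statement7 (n p : ℕ) (hn : 0 < n) (hp : 0 < p) (O : Csam n p)
    (P : Profile n p) (hP : ValidProfile P)
    (A : Fin n → Bundle n p) (hA : ValidAlloc A)
    (isOpt : Fin n → Bool)
    (hplay : ∀ j : Fin n, (isOpt j = true → OptPlays O P A j) ∧
      (isOpt j = false → PesPlays O P A j))
    (j : Fin n) (hj : isOpt j = true) :
    rank (P j) (A j) ≤ n ^ p + 1 - optProd O j :=
  statement7_general n p hp O P hP A hA isOpt hplay j hj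
end

section
/- Among all categorial sequential allocation mechanisms with all-optimistic agents, serial dictatorships achieve the minimum possible worst-case utilitarian rank, which equals n(n^p + 1) − ∑_{j=1}^{n} j^p, where the worst-case utilitarian rank of f_O is the maximum over profiles of the sum over agents of the rank of the bundle they receive. -/
open scoped Classical

/-- `O` is a serial dictatorship order: there is an order `σ` of the agents such that
all picks of an earlier agent precede all picks of a later agent. -/
def IsSerialDict {n p : ℕ} (O : Csam n p) : Prop :=
  ∃ σ : Fin n ≃ Fin n, ∀ j j' : Fin n, ∀ i i' : Fin p, j ≠ j' →
    (O.symm (j, i) < O.symm (j', i') ↔ σ j < σ j')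

/-!
In a serial dictatorship nobody picks while agent `j` is picking, so an optimistic agent ends up
with her top bundle among those achievable at her first pick. If `k` agents precede her, at least
`(n - k) ^ p` bundles are achievable then, and she ranks all of them below what she gets.

For an arbitrary order, let agent `j` receive item `j` in every category, and let `T j` be her
first round after which no other agent picks from a category before she does. At each earlier
round she is interrupted, which yields a bundle she may rank first that is compatible with
picking `j` at every round where it is still achievable. Ranking these bundles first and every
bundle dead at `T j` above her allocation keeps her picks optimistic, while her rank becomes at
least `n ^ p + 1` minus the number of bundles achievable at `T j`, which is at most
`(g j + 1) ^ p` when `g j` agents settle after her. The `g j` are distinct, hence `0, …, n - 1`.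
-/

open Finset

section StrictTotalOrder

variable {α : Type*}

lemma exists_isStrictTotalOrder_refining [Fintype α] {β : Type*} [LinearOrder β] (f : α → β) :
    ∃ R : α → α → Prop, IsStrictTotalOrder α R ∧ ∀ a b, f a < f b → R a b := by
  let key : α → β ×ₗ Fin (Fintype.card α) := fun a => toLex (f a, Fintype.equivFin α a)
  have hkey : Function.Injective key := fun a b h =>
    (Fintype.equivFin α).injective (congrArg (fun x => (ofLex x).2) h)
  let _ : LinearOrder α := LinearOrder.lift' key hkey
  exact ⟨(· < ·), inferInstance, fun a b h => Prod.Lex.toLex_lt_toLex.2 (Or.inl h)⟩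

lemma exists_least_of_isStrictTotalOrder [Finite α] (R : α → α → Prop) [IsStrictTotalOrder α R]
    (s : Finset α) (hs : s.Nonempty) : ∃ b ∈ s, ∀ b' ∈ s, b' ≠ b → R b b' := by
  obtain ⟨b, hb, hmin⟩ := (Finite.wellFounded_of_trans_of_irrefl R).has_min s hs
  refine ⟨b, hb, fun b' hb' hne => ?_⟩
  rcases trichotomous (r := R) b b' with h | h | h
  · exact h
  · exact absurd h.symm hne
  · exact absurd h (hmin b' hb')

lemma sum_card_filter_lt_eq_sum_range {M : Type*} [AddCommMonoid M] {β : Type*} [LinearOrder β]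
    {n : ℕ} (f : Fin n → β) (hf : Function.Injective f) (h : ℕ → M) :
    ∑ j, h #{d | f d < f j} = ∑ m ∈ range n, h m := by
  set k : Fin n → ℕ := fun j => #{d | f d < f j}
  have hk_lt : ∀ {a b}, f a < f b → k a < k b := fun {a b} hab =>
    card_lt_card ⟨fun d hd => by simp only [mem_filter_univ] at hd ⊢; exact hd.trans hab,
      fun hsub => by simpa using hsub ((mem_filter_univ a).2 hab)⟩
  have hk_inj : Function.Injective k := fun a b hab => by
    by_contra hne
    rcases lt_or_gt_of_ne (hf.ne hne) with h | h
    · exact (hk_lt h).ne hab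
    · exact (hk_lt h).ne' hab
  have himage : univ.image k = range n := by
    refine eq_of_subset_of_card_le (fun m hm => ?_) (by simp [card_image_of_injective _ hk_inj])
    obtain ⟨j, -, rfl⟩ := mem_image.1 hm
    exact mem_range.2 ((card_lt_card (filter_ssubset.2 ⟨j, mem_univ _, lt_irrefl (f j)⟩)).trans_eq
      (card_fin n))
  rw [← himage, sum_image fun a _ b _ hab => hk_inj hab]

end StrictTotalOrder

section Achievable

variable {n p : ℕ} (O : Csam n p) {A : Fin n → Bundle n p}

lemma rank_add_card_filter_not (R : Pref n p) (b : Bundle n p) :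
    rank R b + #{c | ¬R c b} = n ^ p + 1 := by
  rw [rank, add_assoc, card_filter_add_card_filter_not, card_univ]
  simp [add_comm]

lemma achievable_self (hA : ValidAlloc A) (j : Fin n) (t : Fin (n * p)) :
    achievable O A j t (A j) := by
  refine ⟨fun _ _ => rfl, fun c hc d hd hdj => ?_⟩
  obtain rfl : d = j := hA c hdj
  exact hc hd

lemma achievable_of_le (hA : ValidAlloc A) {j : Fin n} {t t' : Fin (n * p)} (htt' : t ≤ t')
    {b : Bundle n p} (hb : achievable O A j t' b) : achievable O A j t b := by
  refine ⟨fun c hc => hb.1 c (hc.trans_le htt'), fun c hc => ?_⟩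
  by_cases hc' : O.symm (j, c) < t'
  · rw [hb.1 c hc']
    exact (achievable_self O hA j t).2 c hc
  · exact fun d hd => hb.2 c hc' d (hd.trans_le htt')

noncomputable def choiceSet (A : Fin n → Bundle n p) (j : Fin n) (t : Fin (n * p)) (c : Fin p) :
    Finset (Fin n) :=
  if O.symm (j, c) < t then {A j c} else univ.filter (availAt O A t c)

lemma card_filter_achievable (j : Fin n) (t : Fin (n * p)) :
    #{x | achievable O A j t x} = ∏ c, #(choiceSet O A j t c) := by
  rw [← Fintype.card_piFinset]
  congr 1
  ext x
  simp only [mem_filter_univ, Fintype.mem_piFinset, choiceSet]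
  refine ⟨fun hx c => ?_, fun hx => ⟨fun c hc => ?_, fun c hc => ?_⟩⟩
  · split_ifs with hc
    · exact mem_singleton.2 (hx.1 c hc)
    · exact (mem_filter_univ _).2 (hx.2 c hc)
  · simpa [hc] using hx c
  · simpa [hc] using hx c

lemma sub_card_le_card_filter_availAt (t : Fin (n * p)) (c : Fin p) :
    n - #{d | O.symm (d, c) < t} ≤ #(univ.filter (availAt O A t c)) := by
  have hsub : univ \ ({d | O.symm (d, c) < t} : Finset (Fin n)).image (A · c) ⊆
      univ.filter (availAt O A t c) := fun e he => (mem_filter_univ _).2 fun d hd hde =>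
    (mem_sdiff.1 he).2 (mem_image.2 ⟨d, (mem_filter_univ _).2 hd, hde⟩)
  calc n - #{d | O.symm (d, c) < t}
      ≤ n - #(({d | O.symm (d, c) < t} : Finset (Fin n)).image (A · c)) :=
        Nat.sub_le_sub_left card_image_le n
    _ = #(univ \ ({d | O.symm (d, c) < t} : Finset (Fin n)).image (A · c)) := by
        rw [card_sdiff_of_subset (subset_univ _), card_univ, Fintype.card_fin]
    _ ≤ _ := card_le_card hsub

end Achievable

section SerialDictatorship

variable {n p : ℕ} {O : Csam n p} {P : Profile n p} {A : Fin n → Bundle n p} {j : Fin n}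

lemma eq_of_optPlays_of_consecutive [IsStrictTotalOrder _ (P j)] (hA : ValidAlloc A)
    (hOpt : OptPlays O P A j) {i₀ : Fin p} (hfirst : ∀ c, O.symm (j, i₀) ≤ O.symm (j, c))
    (hblock : ∀ d c c', d ≠ j → O.symm (d, c) < O.symm (j, c') → O.symm (d, c) < O.symm (j, i₀))
    {b : Bundle n p} (hb : achievable O A j (O.symm (j, i₀)) b)
    (htop : ∀ b', achievable O A j (O.symm (j, i₀)) b' → b' ≠ b → P j b b') : A j = b := by
  by_contra hne
  obtain ⟨c, hc, hmin⟩ := exists_min_image {c | A j c ≠ b c} (fun c => O.symm (j, c))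
    (by simpa [Finset.Nonempty] using Function.ne_iff.1 hne)
  have hbc : achievable O A j (O.symm (j, c)) b := by
    refine ⟨fun e he => ?_, fun e he d hd => ?_⟩
    · by_contra h
      exact (hmin e ((mem_filter_univ e).2 (Ne.symm h))).not_gt he
    · have hdj : d ≠ j := by rintro rfl; exact he hd
      exact hb.2 e (hfirst e).not_gt d (hblock d e c hdj hd)
  obtain ⟨b', hb', htop', hcomp⟩ := hOpt c
  obtain rfl : b' = b := by
    by_contra h
    exact asymm (htop b' (achievable_of_le O hA (hfirst c) hb') h) (htop' b hbc (Ne.symm h))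
  exact (mem_filter_univ c).1 hc hcomp

lemma pow_sub_le_card_filter_achievable {t : Fin (n * p)} {k : ℕ}
    (hfirst : ∀ c, ¬O.symm (j, c) < t) (hk : ∀ c, #{d | O.symm (d, c) < t} ≤ k) :
    (n - k) ^ p ≤ #{x | achievable O A j t x} := by
  rw [card_filter_achievable]
  calc (n - k) ^ p = ∏ _c : Fin p, (n - k) := by simp
    _ ≤ ∏ c, #(choiceSet O A j t c) := prod_le_prod' fun c _ => by
        rw [choiceSet, if_neg (hfirst c)]
        exact (Nat.sub_le_sub_left (hk c) n).trans (sub_card_le_card_filter_availAt O t c)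

lemma rank_add_pow_le_of_serial (hp : 0 < p) {σ : Fin n ≃ Fin n}
    (hσ : ∀ j j' i i', j ≠ j' → (O.symm (j, i) < O.symm (j', i') ↔ σ j < σ j'))
    [IsStrictTotalOrder _ (P j)] (hA : ValidAlloc A) (hOpt : OptPlays O P A j) :
    rank (P j) (A j) + (n - #{d | σ d < σ j}) ^ p ≤ n ^ p + 1 := by
  have : Nonempty (Fin p) := ⟨⟨0, hp⟩⟩
  obtain ⟨i₀, -, hfirst⟩ := exists_min_image univ (fun c => O.symm (j, c)) univ_nonempty
  obtain ⟨b, hb, htop, -⟩ := hOpt i₀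
  have hAb : A j = b := eq_of_optPlays_of_consecutive hA hOpt (fun c => hfirst c (mem_univ c))
    (fun d c c' hdj h => (hσ d j c i₀ hdj).2 ((hσ d j c c' hdj).1 h)) hb htop
  have hworse : #{x | achievable O A j (O.symm (j, i₀)) x} ≤ #{x | ¬P j x (A j)} :=
    card_le_card fun x hx => by
      rw [mem_filter_univ] at hx ⊢
      rw [hAb]
      rcases eq_or_ne x b with rfl | hxb
      · exact irrefl x
      · exact asymm (htop x hx hxb)
  have hcount : (n - #{d | σ d < σ j}) ^ p ≤ #{x | achievable O A j (O.symm (j, i₀)) x} :=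
    pow_sub_le_card_filter_achievable (fun c => (hfirst c (mem_univ c)).not_gt)
      fun c => card_le_card fun d hd => by
        rw [mem_filter_univ] at hd ⊢
        have hdj : d ≠ j := by rintro rfl; exact (hfirst c (mem_univ c)).not_gt hd
        exact (hσ d j c i₀ hdj).1 hd
  have := rank_add_card_filter_not (P j) (A j)
  omega

theorem sum_rank_le_of_isSerialDict (hp : 0 < p) (hSD : IsSerialDict O) (hP : ValidProfile P)
    (hA : ValidAlloc A) (hOpt : ∀ j, OptPlays O P A j) :
    ∑ j, rank (P j) (A j) ≤ n * (n ^ p + 1) - ∑ j ∈ range n, (j + 1) ^ p := by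
  obtain ⟨σ, hσ⟩ := hSD
  have hsum : ∑ j, (n - #{d | σ d < σ j}) ^ p = ∑ j ∈ range n, (j + 1) ^ p := by
    rw [sum_card_filter_lt_eq_sum_range σ σ.injective (fun m => (n - m) ^ p),
      ← sum_range_reflect]
    exact sum_congr rfl fun m hm => by rw [mem_range] at hm; congr 1; omega
  have hle := sum_le_sum fun j (_ : j ∈ univ) =>
    have := hP j; rank_add_pow_le_of_serial hp hσ hA (hOpt j)
  rw [sum_add_distrib, hsum, sum_const, card_univ, Fintype.card_fin, smul_eq_mul] at hle
  omega

end SerialDictatorship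

section WorstCaseProfile

variable {n p : ℕ} (O : Csam n p)

def constAlloc (n p : ℕ) : Fin n → Bundle n p := fun j _ => j

lemma validAlloc_constAlloc : ValidAlloc (constAlloc n p) := fun _ _ _ h => h

lemma availAt_constAlloc_iff {t : Fin (n * p)} {c : Fin p} {d : Fin n} :
    availAt O (constAlloc n p) t c d ↔ ¬O.symm (d, c) < t :=
  ⟨fun h hd => h d hd rfl, fun h _ hd' hdd' => h (hdd' ▸ hd')⟩

def Uninterrupted (j : Fin n) (t : Fin (n * p)) : Prop :=
  ∀ d c, t < O.symm (d, c) → O.symm (j, c) ≤ O.symm (d, c)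

lemma exists_first_uninterrupted (hp : 0 < p) (j : Fin n) :
    ∃ c₀, Uninterrupted O j (O.symm (j, c₀)) ∧
      ∀ c, O.symm (j, c) < O.symm (j, c₀) → ¬Uninterrupted O j (O.symm (j, c)) := by
  have : Nonempty (Fin p) := ⟨⟨0, hp⟩⟩
  obtain ⟨cₗ, -, hlast⟩ := exists_max_image univ (fun c => O.symm (j, c)) univ_nonempty
  obtain ⟨c₀, hc₀, hmin⟩ := exists_min_image {c | Uninterrupted O j (O.symm (j, c))}
    (fun c => O.symm (j, c))
    ⟨cₗ, (mem_filter_univ cₗ).2 fun d c h => (hlast c (mem_univ c)).trans h.le⟩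
  exact ⟨c₀, (mem_filter_univ c₀).1 hc₀,
    fun c hc hU => (hmin c ((mem_filter_univ c).2 hU)).not_gt hc⟩

def Loyal (A : Fin n → Bundle n p) (j : Fin n) (x : Bundle n p) : Prop :=
  ∀ c, achievable O A j (O.symm (j, c)) x → x c = A j c

lemma exists_loyal_of_not_uninterrupted {j : Fin n} {t : Fin (n * p)}
    (h : ¬Uninterrupted O j t) : ∃ x, x ≠ constAlloc n p j ∧ Loyal O (constAlloc n p) j x ∧
      achievable O (constAlloc n p) j t x := by
  simp only [Uninterrupted, not_forall, not_le] at h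
  obtain ⟨d, c, htd, hdc⟩ := h
  have hdj : d ≠ j := by rintro rfl; exact lt_irrefl _ hdc
  refine ⟨Function.update (constAlloc n p j) c d,
    fun h => hdj (by simpa [constAlloc] using congrFun h c),
    fun e he => ?_, fun e he => ?_, fun e he => ?_⟩
  · rcases eq_or_ne e c with rfl | hec
    · exact (he.2 e (lt_irrefl _) d hdc (by simp [constAlloc])).elim
    · simp [hec]
  · have hec : e ≠ c := by rintro rfl; exact lt_asymm he (htd.trans hdc)
    simp [hec]
  · rw [availAt_constAlloc_iff]
    rcases eq_or_ne e c with rfl | hec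
    · simpa using htd.not_gt
    · simpa [hec, constAlloc] using he

/-- Loyal bundles on top keep every optimistic pick of agent `j` equal to `j`; ranking every bundle
that is dead at round `t` above `constAlloc n p j` makes the rank of the latter large. -/
noncomputable def adversarialClass (j : Fin n) (t : Fin (n * p)) (x : Bundle n p) : ℕ :=
  if x = constAlloc n p j then 2
  else if Loyal O (constAlloc n p) j x then 0
  else if achievable O (constAlloc n p) j t x then 3 else 1

lemma optPlays_constAlloc {P : Profile n p} {j : Fin n} [IsStrictTotalOrder _ (P j)] {c₀ : Fin p}
    (hc₀ : ∀ c, O.symm (j, c) < O.symm (j, c₀) → ¬Uninterrupted O j (O.symm (j, c)))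
    (hP : ∀ x y, adversarialClass O j (O.symm (j, c₀)) x <
      adversarialClass O j (O.symm (j, c₀)) y → P j x y) :
    OptPlays O P (constAlloc n p) j := by
  intro i
  obtain ⟨b, hb, htop⟩ := exists_least_of_isStrictTotalOrder (P j)
    {x | achievable O (constAlloc n p) j (O.symm (j, i)) x}
    ⟨_, (mem_filter_univ _).2 (achievable_self O validAlloc_constAlloc j _)⟩
  simp only [mem_filter_univ] at hb htop
  refine ⟨b, hb, htop, ?_⟩
  by_cases hbA : b = constAlloc n p j
  · rw [hbA]
  by_cases hbL : Loyal O (constAlloc n p) j b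
  · exact (hbL i hb).symm
  exfalso
  rcases lt_or_ge (O.symm (j, i)) (O.symm (j, c₀)) with hi | hi
  · obtain ⟨w, hwA, hwL, hw⟩ := exists_loyal_of_not_uninterrupted O (hc₀ i hi)
    refine asymm (hP w b ?_) (htop w hw (by rintro rfl; exact hbL hwL))
    simp only [adversarialClass, hwA, hwL, hbA, hbL, if_true, if_false]
    split_ifs <;> norm_num
  · by_cases hbT : achievable O (constAlloc n p) j (O.symm (j, c₀)) b
    · exact asymm (htop _ (achievable_self O validAlloc_constAlloc j _) (Ne.symm hbA))
        (hP _ _ (by simp [adversarialClass, hbA, hbL, hbT]))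
    · exact hbT (achievable_of_le O validAlloc_constAlloc hi hb)

variable {O}

lemma lt_of_uninterrupted {cat : Fin n → Fin p} (hU : ∀ j, Uninterrupted O j (O.symm (j, cat j)))
    {j d : Fin n} (hdj : d ≠ j) {c : Fin p} (hj : O.symm (j, cat j) ≤ O.symm (j, c))
    (hd : ¬O.symm (d, c) < O.symm (j, cat j)) : O.symm (j, cat j) < O.symm (d, cat d) := by
  have hne : ∀ {a b : Fin n} {x y : Fin p}, a ≠ b → O.symm (a, x) ≠ O.symm (b, y) :=
    fun hab h => hab (congrArg Prod.fst (O.symm.injective h))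
  have h₁ : O.symm (j, cat j) < O.symm (d, c) := lt_of_le_of_ne (not_lt.1 hd) (hne hdj.symm)
  have h₂ : O.symm (j, c) < O.symm (d, c) := lt_of_le_of_ne (hU j d c h₁) (hne hdj.symm)
  by_contra h
  -- otherwise `j`'s pick from `c` would interrupt `d` after `d` settled
  have h₃ : O.symm (d, cat d) < O.symm (j, c) :=
    (lt_of_le_of_ne (not_lt.1 h) (hne hdj)).trans_le hj
  exact (hU d j c h₃).not_gt h₂

lemma card_filter_achievable_constAlloc_le {cat : Fin n → Fin p}
    (hU : ∀ j, Uninterrupted O j (O.symm (j, cat j))) (j : Fin n) :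
    #{x | achievable O (constAlloc n p) j (O.symm (j, cat j)) x} ≤
      (#{d | O.symm (j, cat j) < O.symm (d, cat d)} + 1) ^ p := by
  rw [card_filter_achievable]
  calc ∏ c, #(choiceSet O (constAlloc n p) j (O.symm (j, cat j)) c)
      ≤ ∏ _c : Fin p, (#{d | O.symm (j, cat j) < O.symm (d, cat d)} + 1) :=
        prod_le_prod' fun c _ => (card_le_card fun d hd => ?_).trans (card_insert_le j _)
    _ = _ := by simp
  rw [choiceSet] at hd
  split_ifs at hd with hc
  · rw [mem_singleton.1 hd]
    exact mem_insert_self _ _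
  · rw [mem_filter_univ, availAt_constAlloc_iff] at hd
    rcases eq_or_ne d j with rfl | hdj
    · exact mem_insert_self _ _
    · exact mem_insert_of_mem ((mem_filter_univ _).2 (lt_of_uninterrupted hU hdj (not_lt.1 hc) hd))

lemma pow_le_rank_add_pow {cat : Fin n → Fin p} (hU : ∀ j, Uninterrupted O j (O.symm (j, cat j)))
    {P : Profile n p} {j : Fin n}
    (hP : ∀ x y, adversarialClass O j (O.symm (j, cat j)) x <
      adversarialClass O j (O.symm (j, cat j)) y → P j x y) :
    n ^ p + 1 ≤ rank (P j) (constAlloc n p j) +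
      (#{d | O.symm (j, cat j) < O.symm (d, cat d)} + 1) ^ p := by
  have hsub : #{x | ¬P j x (constAlloc n p j)} ≤
      #{x | achievable O (constAlloc n p) j (O.symm (j, cat j)) x} :=
    card_le_card fun x hx => by
      rw [mem_filter_univ] at hx ⊢
      by_contra hach
      rcases eq_or_ne x (constAlloc n p j) with rfl | hxA
      · exact hach (achievable_self O validAlloc_constAlloc j _)
      · refine hx (hP _ _ ?_)
        simp only [adversarialClass, hxA, hach, if_true, if_false]
        split_ifs <;> norm_num
  have := rank_add_card_filter_not (P j) (constAlloc n p j)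
  have := card_filter_achievable_constAlloc_le hU j
  omega

theorem exists_optPlays_le_sum_rank (hp : 0 < p) (O : Csam n p) :
    ∃ P : Profile n p, ValidProfile P ∧
      ∃ A : Fin n → Bundle n p, ValidAlloc A ∧ (∀ j, OptPlays O P A j) ∧
        n * (n ^ p + 1) - ∑ j ∈ range n, (j + 1) ^ p ≤ ∑ j, rank (P j) (A j) := by
  choose cat hU hfirst using exists_first_uninterrupted O hp
  choose P hP hPcls using fun j =>
    exists_isStrictTotalOrder_refining (adversarialClass O j (O.symm (j, cat j)))
  refine ⟨P, hP, constAlloc n p, validAlloc_constAlloc,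
    fun j => have := hP j; optPlays_constAlloc O (hfirst j) (hPcls j), ?_⟩
  have hsum : ∑ j, (#{d | O.symm (j, cat j) < O.symm (d, cat d)} + 1) ^ p =
      ∑ j ∈ range n, (j + 1) ^ p :=
    sum_card_filter_lt_eq_sum_range (fun j => OrderDual.toDual (O.symm (j, cat j)))
      (fun a b h => congrArg Prod.fst (O.symm.injective h)) (fun m => (m + 1) ^ p)
  have hle := sum_le_sum fun j (_ : j ∈ univ) => pow_le_rank_add_pow hU (hPcls j)
  rw [sum_const, card_univ, Fintype.card_fin, smul_eq_mul, sum_add_distrib, hsum] at hle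
  omega

end WorstCaseProfile

theorem statement10_general (n p : ℕ) (hp : 0 < p) :
    (∀ O : Csam n p, IsSerialDict O →
      ∀ P : Profile n p, ValidProfile P →
        ∀ A : Fin n → Bundle n p, ValidAlloc A → (∀ j, OptPlays O P A j) →
          ∑ j : Fin n, rank (P j) (A j) ≤
            n * (n ^ p + 1) - ∑ j ∈ Finset.range n, (j + 1) ^ p) ∧
    (∀ O : Csam n p, ∃ P : Profile n p, ValidProfile P ∧
      ∃ A : Fin n → Bundle n p, ValidAlloc A ∧ (∀ j, OptPlays O P A j) ∧
        n * (n ^ p + 1) - ∑ j ∈ Finset.range n, (j + 1) ^ p ≤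
          ∑ j : Fin n, rank (P j) (A j)) :=
  ⟨fun _ hSD _ hP _ hA hOpt => sum_rank_le_of_isSerialDict hp hSD hP hA hOpt,
    exists_optPlays_le_sum_rank hp⟩

theorem statement10 (n p : ℕ) (hn : 0 < n) (hp : 0 < p) :
    (∀ O : Csam n p, IsSerialDict O →
      ∀ P : Profile n p, ValidProfile P →
        ∀ A : Fin n → Bundle n p, ValidAlloc A → (∀ j, OptPlays O P A j) →
          ∑ j : Fin n, rank (P j) (A j) ≤
            n * (n ^ p + 1) - ∑ j ∈ Finset.range n, (j + 1) ^ p) ∧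
    (∀ O : Csam n p, ∃ P : Profile n p, ValidProfile P ∧
      ∃ A : Fin n → Bundle n p, ValidAlloc A ∧ (∀ j, OptPlays O P A j) ∧
        n * (n ^ p + 1) - ∑ j ∈ Finset.range n, (j + 1) ^ p ≤
          ∑ j : Fin n, rank (P j) (A j)) :=
  statement10_general n p hp
end
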